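/- (Effective-error reduction for measurement-outcome errors given an error-free round.) Assume the CSS code and the code-surgery datum. Let e = (u₀, u⁽¹⁾, …, u⁽ᵈᵀ⁻¹⁾, u₁, v⁽¹⁾, …, v⁽ᵈᵀ⁾) with u₀, u₁ ∈ F₂^{n}, u⁽ᵗ⁾ ∈ F₂^{n+r_G} for t = 1, …, d_T−1 and v⁽ˢ⁾ ∈ F₂^{r_Z+n_G} for s = 1, …, d_T, and suppose H^{st}_Z eᵀ = 0 (with the column blocks of H^{st}_Z acting on (u₀, (u⁽¹⁾,…,u⁽ᵈᵀ⁻¹⁾), u₁, (v⁽¹⁾,…,v⁽ᵈᵀ⁾)) respectively). Suppose moreover that v⁽ʲ⁾ = 0 for some j ∈ {1, …, d_T}. Define u_eff = u₀ + Σ_{t=1}^{j−1} ũ⁽ᵗ⁾ ∈ F₂^{n}, where ũ⁽ᵗ⁾ ∈ F₂^{n} is the vector of the first n coordinates of u⁽ᵗ⁾ (i.e., ũ⁽ᵗ⁾ᵀ = η u⁽ᵗ⁾ᵀ). Then H_Z u_effᵀ = 0, α J_Z u_effᵀ = J^{st}_{oc} eᵀ, and |u_eff| ≤ |e|. -/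

import Mathlib

open Matrix

/-- Error-wise distance `d(H, J, ψ) ∈ ℕ∞`: the infimum of the Hamming weight `|e|` over all
row vectors `e` with `H eᵀ = 0` and `J eᵀ = ψᵀ`; `⊤` if no such `e` exists. -/
noncomputable def ewDist {χ κ μ : Type*} [Fintype κ]
    (H : Matrix χ κ (ZMod 2)) (J : Matrix μ κ (ZMod 2)) (ψ : μ → ZMod 2) : ℕ∞ :=
  sInf {w : ℕ∞ | ∃ e : κ → ZMod 2, H.mulVec e = 0 ∧ J.mulVec e = ψ ∧ w = (hammingNorm e : ℕ∞)}

/-- The pair `(H_G, H_M)` is `(d_R, S)`-bounded. -/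
def BoundedPair {n rG rM nG : ℕ} (HG : Matrix (Fin rG) (Fin nG) (ZMod 2))
    (HM : Matrix (Fin rM) (Fin rG) (ZMod 2)) (S : Matrix (Fin nG) (Fin n) (ZMod 2))
    (dR : ℕ) : Prop :=
  ∀ v : Fin rG → ZMod 2, HM.mulVec v = 0 → hammingNorm v < dR →
    ∃ u : Fin nG → ZMod 2, v = HG.mulVec u ∧
      hammingNorm (Matrix.vecMul u S) ≤ hammingNorm v

/-- Deformed-code X check matrix `H̄_X = [[H_X, T],[0, H_M]]`. -/
def HbarX {n rX rG rM : ℕ} (HX : Matrix (Fin rX) (Fin n) (ZMod 2))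
    (T : Matrix (Fin rX) (Fin rG) (ZMod 2)) (HM : Matrix (Fin rM) (Fin rG) (ZMod 2)) :
    Matrix (Fin rX ⊕ Fin rM) (Fin n ⊕ Fin rG) (ZMod 2) :=
  Matrix.fromBlocks HX T 0 HM

/-- Deformed-code Z check matrix `H̄_Z = [[H_Z, 0],[S, H_Gᵀ]]`. -/
def HbarZ {n rZ rG nG : ℕ} (HZ : Matrix (Fin rZ) (Fin n) (ZMod 2))
    (S : Matrix (Fin nG) (Fin n) (ZMod 2)) (HG : Matrix (Fin rG) (Fin nG) (ZMod 2)) :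
    Matrix (Fin rZ ⊕ Fin nG) (Fin n ⊕ Fin rG) (ZMod 2) :=
  Matrix.fromBlocks HZ 0 S HGᵀ

/-- Deformed-code X generator matrix `J̄_X = (α_⊥ J_X  β)`. -/
def JbarX {n k q rG : ℕ} (JX : Matrix (Fin k) (Fin n) (ZMod 2))
    (αperp : Matrix (Fin (k - q)) (Fin k) (ZMod 2))
    (β : Matrix (Fin (k - q)) (Fin rG) (ZMod 2)) :
    Matrix (Fin (k - q)) (Fin n ⊕ Fin rG) (ZMod 2) :=
  Matrix.fromCols (αperp * JX) β

/-- Deformed-code Z generator matrix `J̄_Z = ((α_⊥ʳ)ᵀ J_Z  0)`. -/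
def JbarZ {n k q rG : ℕ} (JZ : Matrix (Fin k) (Fin n) (ZMod 2))
    (αperpR : Matrix (Fin k) (Fin (k - q)) (ZMod 2)) :
    Matrix (Fin (k - q)) (Fin n ⊕ Fin rG) (ZMod 2) :=
  Matrix.fromCols (αperpRᵀ * JZ) (0 : Matrix (Fin (k - q)) (Fin rG) (ZMod 2))

/-- Repetition-code check matrix `H_m ∈ F₂^{(m−1)×m}`, `(H_m)_{i,j} = 1` iff `j ∈ {i, i+1}`
(1-based); in 0-based indexing: `j = i` or `j = i+1`. -/
def repH (m : ℕ) : Matrix (Fin (m - 1)) (Fin m) (ZMod 2) :=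
  Matrix.of fun i j => if (j : ℕ) = (i : ℕ) ∨ (j : ℕ) = (i : ℕ) + 1 then 1 else 0

/-- The matrix `(E_p  0) ∈ F₂^{p×m}` selecting the first `p` coordinates. -/
def projFirst (p m : ℕ) : Matrix (Fin p) (Fin m) (ZMod 2) :=
  Matrix.of fun i j => if (j : ℕ) = (i : ℕ) then 1 else 0

/-- Hamming weight of a matrix (number of nonzero entries). -/
def matWeight {ι κ : Type*} [Fintype ι] [Fintype κ] (M : Matrix ι κ (ZMod 2)) : ℕ :=
  hammingNorm (Function.uncurry M)

/-- Spacetime X check matrix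
`H^{st}_X = [[H̄_X, 0, 0, E_{d_T;1}⊗E], [0, E_{d_T−1}⊗H̄_X, 0, H_{d_T}⊗E], [0, 0, H̄_X, E_{d_T;d_T}⊗E]]`,
built from the deformed check matrix `H̄_X` (here `E = E_{r_X+r_M}`).  Rounds are 0-based:
round index `s : Fin d_T`, with `s = 0` the first round and `s = d_T − 1` the last. -/
def HstX {n rX rG rM : ℕ} (dT : ℕ)
    (HbX : Matrix (Fin rX ⊕ Fin rM) (Fin n ⊕ Fin rG) (ZMod 2)) :
    Matrix ((Fin rX ⊕ Fin rM) ⊕ (Fin (dT - 1) × (Fin rX ⊕ Fin rM)) ⊕ (Fin rX ⊕ Fin rM))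
      ((Fin n ⊕ Fin rG) ⊕ (Fin (dT - 1) × (Fin n ⊕ Fin rG)) ⊕ (Fin n ⊕ Fin rG) ⊕
        (Fin dT × (Fin rX ⊕ Fin rM))) (ZMod 2) :=
  Matrix.of fun i j =>
    match i, j with
    | Sum.inl c, Sum.inl qq => HbX c qq
    | Sum.inl c, Sum.inr (Sum.inr (Sum.inr (s, c'))) =>
        if (s : ℕ) = 0 ∧ c' = c then 1 else 0
    | Sum.inr (Sum.inl (t, c)), Sum.inr (Sum.inl (t', qq)) =>
        if t' = t then HbX c qq else 0
    | Sum.inr (Sum.inl (t, c)), Sum.inr (Sum.inr (Sum.inr (s, c'))) =>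
        if ((s : ℕ) = (t : ℕ) ∨ (s : ℕ) = (t : ℕ) + 1) ∧ c' = c then 1 else 0
    | Sum.inr (Sum.inr c), Sum.inr (Sum.inr (Sum.inl qq)) => HbX c qq
    | Sum.inr (Sum.inr c), Sum.inr (Sum.inr (Sum.inr (s, c'))) =>
        if (s : ℕ) = dT - 1 ∧ c' = c then 1 else 0
    | _, _ => 0

/-- Spacetime Z check matrix
`H^{st}_Z = [[H_Z, 0, 0, E_{d_T;1}⊗γ₁], [0, E_{d_T−1}⊗H̄_Z, 0, H_{d_T}⊗E], [0, 0, H_Z, E_{d_T;d_T}⊗γ₁]]`,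
built from `H_Z` and the deformed check matrix `H̄_Z` (here `E = E_{r_Z+n_G}` and
`γ₁ = (E_{r_Z}  0)`). -/
def HstZ {n rZ rG nG : ℕ} (dT : ℕ) (HZ : Matrix (Fin rZ) (Fin n) (ZMod 2))
    (HbZ : Matrix (Fin rZ ⊕ Fin nG) (Fin n ⊕ Fin rG) (ZMod 2)) :
    Matrix (Fin rZ ⊕ (Fin (dT - 1) × (Fin rZ ⊕ Fin nG)) ⊕ Fin rZ)
      (Fin n ⊕ (Fin (dT - 1) × (Fin n ⊕ Fin rG)) ⊕ Fin n ⊕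
        (Fin dT × (Fin rZ ⊕ Fin nG))) (ZMod 2) :=
  Matrix.of fun i j =>
    match i, j with
    | Sum.inl z, Sum.inl a => HZ z a
    | Sum.inl z, Sum.inr (Sum.inr (Sum.inr (s, w))) =>
        if (s : ℕ) = 0 ∧ w = Sum.inl z then 1 else 0
    | Sum.inr (Sum.inl (t, w)), Sum.inr (Sum.inl (t', qq)) =>
        if t' = t then HbZ w qq else 0
    | Sum.inr (Sum.inl (t, w)), Sum.inr (Sum.inr (Sum.inr (s, w'))) =>
        if ((s : ℕ) = (t : ℕ) ∨ (s : ℕ) = (t : ℕ) + 1) ∧ w' = w then 1 else 0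
    | Sum.inr (Sum.inr z), Sum.inr (Sum.inr (Sum.inl a)) => HZ z a
    | Sum.inr (Sum.inr z), Sum.inr (Sum.inr (Sum.inr (s, w))) =>
        if (s : ℕ) = dT - 1 ∧ w = Sum.inl z then 1 else 0
    | _, _ => 0

/-- Spacetime X generator matrix `J^{st}_X = (J̄_X, 1_{d_T−1}⊗J̄_X, J̄_X, 0)`. -/
def JstX {n k q rX rG rM : ℕ} (dT : ℕ)
    (JbX : Matrix (Fin (k - q)) (Fin n ⊕ Fin rG) (ZMod 2)) :
    Matrix (Fin (k - q))
      ((Fin n ⊕ Fin rG) ⊕ (Fin (dT - 1) × (Fin n ⊕ Fin rG)) ⊕ (Fin n ⊕ Fin rG) ⊕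
        (Fin dT × (Fin rX ⊕ Fin rM))) (ZMod 2) :=
  Matrix.of fun i j =>
    match j with
    | Sum.inl qq => JbX i qq
    | Sum.inr (Sum.inl (_, qq)) => JbX i qq
    | Sum.inr (Sum.inr (Sum.inl qq)) => JbX i qq
    | Sum.inr (Sum.inr (Sum.inr _)) => 0

/-- Spacetime Z generator matrix `J^{st}_Z = ((α_⊥ʳ)ᵀJ_Z, 1_{d_T−1}⊗J̄_Z, (α_⊥ʳ)ᵀJ_Z, 0)`,
given `JZ' = (α_⊥ʳ)ᵀ J_Z` and `J̄_Z`. -/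
def JstZ {n k q rZ rG nG : ℕ} (dT : ℕ)
    (JZ' : Matrix (Fin (k - q)) (Fin n) (ZMod 2))
    (JbZ : Matrix (Fin (k - q)) (Fin n ⊕ Fin rG) (ZMod 2)) :
    Matrix (Fin (k - q))
      (Fin n ⊕ (Fin (dT - 1) × (Fin n ⊕ Fin rG)) ⊕ Fin n ⊕
        (Fin dT × (Fin rZ ⊕ Fin nG))) (ZMod 2) :=
  Matrix.of fun i j =>
    match j with
    | Sum.inl a => JZ' i a
    | Sum.inr (Sum.inl (_, qq)) => JbZ i qq
    | Sum.inr (Sum.inr (Sum.inl a)) => JZ' i a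
    | Sum.inr (Sum.inr (Sum.inr _)) => 0

/-- Spacetime generator matrix for measured Z logical operators
`J^{st}_{mz} = (αJ_Z, 1_{d_T−1}⊗(αJ_Z η), αJ_Z, 0)`, given `M = α J_Z`
(note `α J_Z η = (α J_Z  0)`). -/
def JstMZ {n q rZ rG nG : ℕ} (dT : ℕ) (M : Matrix (Fin q) (Fin n) (ZMod 2)) :
    Matrix (Fin q)
      (Fin n ⊕ (Fin (dT - 1) × (Fin n ⊕ Fin rG)) ⊕ Fin n ⊕
        (Fin dT × (Fin rZ ⊕ Fin nG))) (ZMod 2) :=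
  Matrix.of fun i j =>
    match j with
    | Sum.inl a => M i a
    | Sum.inr (Sum.inl (_, Sum.inl a)) => M i a
    | Sum.inr (Sum.inl (_, Sum.inr _)) => 0
    | Sum.inr (Sum.inr (Sum.inl a)) => M i a
    | Sum.inr (Sum.inr (Sum.inr _)) => 0

/-- Spacetime generator matrix for measurement outcomes
`J^{st}_{oc} = (αJ_Z, 0, 0, E_{d_T;1}⊗(αJ_Z R γ₂))`, given `M = α J_Z` and `N = α J_Z R`
(note `α J_Z R γ₂ = (0  α J_Z R)`). -/
def JstOC {n q rZ rG nG : ℕ} (dT : ℕ) (M : Matrix (Fin q) (Fin n) (ZMod 2))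
    (N : Matrix (Fin q) (Fin nG) (ZMod 2)) :
    Matrix (Fin q)
      (Fin n ⊕ (Fin (dT - 1) × (Fin n ⊕ Fin rG)) ⊕ Fin n ⊕
        (Fin dT × (Fin rZ ⊕ Fin nG))) (ZMod 2) :=
  Matrix.of fun i j =>
    match j with
    | Sum.inl a => M i a
    | Sum.inr (Sum.inl _) => 0
    | Sum.inr (Sum.inr (Sum.inl _)) => 0
    | Sum.inr (Sum.inr (Sum.inr (_, Sum.inl _))) => 0
    | Sum.inr (Sum.inr (Sum.inr (s, Sum.inr g))) => if (s : ℕ) = 0 then N i g else 0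


lemma z2add {a b : ZMod 2} (h : a + b = 0) : a = b := by revert h; revert a b; decide

lemma hn_eq_sum {ι : Type*} [Fintype ι] (f : ι → ZMod 2) :
    hammingNorm f = ∑ x, if f x = 0 then 0 else 1 := by
  rw [hammingNorm, Finset.card_filter]
  exact Finset.sum_congr rfl fun x _ => by split_ifs with h1 h2 h2 <;> simp_all

lemma hn_add_le {ι : Type*} [Fintype ι] (f g : ι → ZMod 2) :
    hammingNorm (f + g) ≤ hammingNorm f + hammingNorm g := by
  simp only [hn_eq_sum, ← Finset.sum_add_distrib]
  refine Finset.sum_le_sum fun x _ => ?_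
  have : ∀ a b : ZMod 2, (if a + b = 0 then 0 else 1) ≤
      (if a = 0 then 0 else 1) + (if b = 0 then 0 else 1) := by decide
  exact this (f x) (g x)

lemma hn_sum_le {γ ι : Type*} [Fintype ι] (s : Finset γ) (f : γ → ι → ZMod 2) :
    hammingNorm (∑ i ∈ s, f i) ≤ ∑ i ∈ s, hammingNorm (f i) := by
  induction s using Finset.cons_induction with
  | empty => simp
  | cons a s ha ih =>
      rw [Finset.sum_cons, Finset.sum_cons]
      exact le_trans (hn_add_le _ _) (by omega)

lemma filter_fin_sum {M : Type*} [AddCommMonoid M] {m : ℕ} (jv : ℕ) (hjv : jv ≤ m)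
    (g : ℕ → M) :
    ∑ t ∈ Finset.univ.filter (fun t : Fin m => (t : ℕ) < jv), g ↑t
      = ∑ i ∈ Finset.range jv, g i := by
  rw [Finset.sum_filter, Fin.sum_univ_eq_sum_range (fun i => if i < jv then g i else 0) m]
  rw [← Finset.sum_filter]
  congr 1
  ext i
  simp only [Finset.mem_filter, Finset.mem_range]
  omega

lemma telescope2 (f : ℕ → ZMod 2) (m : ℕ) :
    ∑ i ∈ Finset.range m, (f i + f (i + 1)) = f 0 + f m := by
  induction m with
  | zero => simp [CharTwo.add_self_eq_zero]
  | succ m ih =>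
      rw [Finset.sum_range_succ, ih]
      have : ∀ a b c : ZMod 2, a + b + (b + c) = a + c := by decide
      exact this _ _ _

/-- effective-error reduction for measurement-outcome errors given an
error-free round `j` (rounds are 0-based, so the sum runs over `t < j`, matching the
1-based sum `Σ_{t=1}^{j−1}`). -/
theorem effective_error_reduction_oc
    {n k q rX rZ rG rM nG : ℕ}
    (HX : Matrix (Fin rX) (Fin n) (ZMod 2)) (HZ : Matrix (Fin rZ) (Fin n) (ZMod 2))
    (JX JZ : Matrix (Fin k) (Fin n) (ZMod 2))
    (hHXHZ : HX * HZᵀ = 0) (hHXJZ : HX * JZᵀ = 0) (hHZJX : HZ * JXᵀ = 0)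
    (hJXJZ : JX * JZᵀ = 1)
    (hq1 : 1 ≤ q) (hqk : q ≤ k)
    (α : Matrix (Fin q) (Fin k) (ZMod 2))
    (αperp : Matrix (Fin (k - q)) (Fin k) (ZMod 2)) (hperp : αperp * αᵀ = 0)
    (αperpR : Matrix (Fin k) (Fin (k - q)) (ZMod 2)) (hrinv : αperp * αperpR = 1)
    (S : Matrix (Fin nG) (Fin n) (ZMod 2)) (T : Matrix (Fin rX) (Fin rG) (ZMod 2))
    (HG : Matrix (Fin rG) (Fin nG) (ZMod 2)) (HM : Matrix (Fin rM) (Fin rG) (ZMod 2))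
    (R : Matrix (Fin n) (Fin nG) (ZMod 2)) (β : Matrix (Fin (k - q)) (Fin rG) (ZMod 2))
    (hs1 : HX * Sᵀ = T * HG) (hs2 : HM * HG = 0)
    (hs3a : α * JZ * R * S = α * JZ) (hs3b : HG * (α * JZ * R)ᵀ = 0)
    (hs4 : αperp * JX * Sᵀ = β * HG)
    (dT : ℕ) (hdT : 2 ≤ dT)
    (u0 u1 : Fin n → ZMod 2)
    (u : Fin (dT - 1) → Fin n ⊕ Fin rG → ZMod 2)
    (v : Fin dT → Fin rZ ⊕ Fin nG → ZMod 2)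
    (e : Fin n ⊕ (Fin (dT - 1) × (Fin n ⊕ Fin rG)) ⊕ Fin n ⊕
        (Fin dT × (Fin rZ ⊕ Fin nG)) → ZMod 2)
    (he : e = Sum.elim u0 (Sum.elim (fun pr => u pr.1 pr.2)
        (Sum.elim u1 (fun pr => v pr.1 pr.2))))
    (hcheck : (HstZ dT HZ (HbarZ HZ S HG)).mulVec e = 0)
    (j : Fin dT) (hj : v j = 0)
    (ueff : Fin n → ZMod 2)
    (hueff : ueff = u0 + ∑ t ∈ Finset.univ.filter (fun t : Fin (dT - 1) => (t : ℕ) < (j : ℕ)),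
        (fun a => u t (Sum.inl a))) :
    HZ.mulVec ueff = 0 ∧
    (α * JZ).mulVec ueff = (JstOC dT (α * JZ) (α * JZ * R)).mulVec e ∧
    hammingNorm ueff ≤ hammingNorm e := by
  have hdT0 : 0 < dT := by omega
  have hjlt : (j : ℕ) ≤ dT - 1 := by omega
  set z0 : Fin dT := ⟨0, hdT0⟩ with hz0
  set V : ℕ → Fin rZ ⊕ Fin nG → ZMod 2 :=
    fun i => if h : i < dT then v ⟨i, h⟩ else 0 with hV
  have mv_sum : ∀ {q' : ℕ} (A : Matrix (Fin q') (Fin n) (ZMod 2))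
      (s : Finset (Fin (dT - 1))) (f : Fin (dT - 1) → Fin n → ZMod 2),
      A.mulVec (∑ t ∈ s, f t) = ∑ t ∈ s, A.mulVec (f t) := by
    intro q' A s f
    have hh := map_sum A.mulVecLin f s
    simpa only [Matrix.mulVecLin_apply] using hh
  -- Equation from the first row block
  have E0 : ∀ z : Fin rZ, (HZ.mulVec u0) z = v z0 (Sum.inl z) := by
    intro z
    have h := congrFun hcheck (Sum.inl z)
    simp only [HstZ, mulVec, dotProduct, Fintype.sum_sum_type, Fintype.sum_prod_type, he,
      Matrix.of_apply, Sum.elim_inl, Sum.elim_inr, ite_and, Finset.sum_ite_eq,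
      Finset.sum_ite_eq', Finset.mem_univ, if_true, zero_mul, mul_zero, Finset.sum_const_zero,
      add_zero, zero_add, one_mul, mul_one, ite_mul, Pi.zero_apply] at h
    have hc : ∀ x : Fin dT, ((x : ℕ) = 0) = (x = z0) := by
      intro x; simp [hz0, Fin.ext_iff]
    simp only [hc] at h
    have hx0 : ∀ x : Fin dT,
        ((∑ x1 : Fin rZ, if x = z0 then
            if (Sum.inl x1 : Fin rZ ⊕ Fin nG) = Sum.inl z then v x (Sum.inl x1) else 0 else 0)
          + ∑ x1 : Fin nG, if x = z0 then
            if (Sum.inr x1 : Fin rZ ⊕ Fin nG) = Sum.inl z then v x (Sum.inr x1) else 0 else 0)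
        = if x = z0 then v x (Sum.inl z) else 0 := by
      intro x; by_cases hx : x = z0 <;> simp [hx, Finset.sum_ite_eq']
    rw [Finset.sum_congr rfl (fun x _ => hx0 x), Finset.sum_ite_eq'] at h
    simp only [Finset.mem_univ, if_true] at h
    exact z2add h
  -- Equation from the middle row blocks
  have Emid : ∀ (t : Fin (dT - 1)) (w : Fin rZ ⊕ Fin nG),
      ((HbarZ HZ S HG).mulVec (u t)) w
        = v ⟨(t : ℕ), by omega⟩ w + v ⟨(t : ℕ) + 1, by omega⟩ w := by
    intro t w
    have h := congrFun hcheck (Sum.inr (Sum.inl (t, w)))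
    simp only [HstZ, mulVec, dotProduct, Fintype.sum_sum_type, Fintype.sum_prod_type, he,
      Matrix.of_apply, Sum.elim_inl, Sum.elim_inr, ite_and, Finset.sum_ite_eq,
      Finset.sum_ite_eq', Finset.mem_univ, if_true, zero_mul, mul_zero, Finset.sum_const_zero,
      add_zero, zero_add, one_mul, mul_one, ite_mul, Pi.zero_apply] at h
    set ta : Fin dT := ⟨(t : ℕ), by omega⟩ with hta
    set tb : Fin dT := ⟨(t : ℕ) + 1, by omega⟩ with htb
    have hx1 : ∀ x : Fin (dT - 1),
        ((∑ a1 : Fin n, if x = t then HbarZ HZ S HG w (Sum.inl a1) * u x (Sum.inl a1) else 0)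
          + ∑ a2 : Fin rG, if x = t then HbarZ HZ S HG w (Sum.inr a2) * u x (Sum.inr a2) else 0)
        = if x = t then ((HbarZ HZ S HG).mulVec (u x)) w else 0 := by
      intro x; by_cases hx : x = t <;>
        simp [hx, mulVec, dotProduct, Fintype.sum_sum_type]
    have hx2 : ∀ x : Fin dT,
        ((∑ a1 : Fin rZ, if (x : ℕ) = (t : ℕ) ∨ (x : ℕ) = (t : ℕ) + 1 then
            (if Sum.inl a1 = w then v x (Sum.inl a1) else 0) else 0)
          + ∑ a2 : Fin nG, if (x : ℕ) = (t : ℕ) ∨ (x : ℕ) = (t : ℕ) + 1 then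
            (if Sum.inr a2 = w then v x (Sum.inr a2) else 0) else 0)
        = if (x : ℕ) = (t : ℕ) ∨ (x : ℕ) = (t : ℕ) + 1 then v x w else 0 := by
      intro x
      by_cases hx : (x : ℕ) = (t : ℕ) ∨ (x : ℕ) = (t : ℕ) + 1
      · simp only [hx, if_true]
        cases w with
        | inl zz => simp [Finset.sum_ite_eq']
        | inr gg => simp [Finset.sum_ite_eq']
      · simp [hx]
    rw [Finset.sum_congr rfl (fun x _ => hx1 x), Finset.sum_congr rfl (fun x _ => hx2 x),
      Finset.sum_ite_eq'] at h
    have hsplit : ∀ x : Fin dT,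
        (if (x : ℕ) = (t : ℕ) ∨ (x : ℕ) = (t : ℕ) + 1 then v x w else 0)
          = (if x = ta then v x w else 0) + (if x = tb then v x w else 0) := by
      intro x
      by_cases h1 : (x : ℕ) = (t : ℕ) <;> by_cases h2 : (x : ℕ) = (t : ℕ) + 1 <;>
        simp [hta, htb, Fin.ext_iff, h1, h2] <;> omega
    rw [Finset.sum_congr rfl (fun x _ => hsplit x), Finset.sum_add_distrib,
      Finset.sum_ite_eq', Finset.sum_ite_eq'] at h
    simp only [Finset.mem_univ, if_true] at h
    exact z2add h
  -- row values of HbarZ applied to u t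
  have hHbl : ∀ (t : Fin (dT - 1)) (z : Fin rZ),
      ((HbarZ HZ S HG).mulVec (u t)) (Sum.inl z)
        = (HZ.mulVec (fun a => u t (Sum.inl a))) z := by
    intro t z
    simp [HbarZ, mulVec, dotProduct, Fintype.sum_sum_type, Matrix.fromBlocks]
  have hHbr : ∀ (t : Fin (dT - 1)) (g : Fin nG),
      ((HbarZ HZ S HG).mulVec (u t)) (Sum.inr g)
        = (S.mulVec (fun a => u t (Sum.inl a))) g
          + (HGᵀ.mulVec (fun r => u t (Sum.inr r))) g := by
    intro t g
    simp [HbarZ, mulVec, dotProduct, Fintype.sum_sum_type, Matrix.fromBlocks]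
  -- Part 1 : HZ ueff = 0
  have part1 : HZ.mulVec ueff = 0 := by
    funext z
    have hlin : (HZ.mulVec ueff) z
        = (HZ.mulVec u0) z
          + ∑ t ∈ Finset.univ.filter (fun t : Fin (dT - 1) => (t : ℕ) < (j : ℕ)),
              (HZ.mulVec (fun a => u t (Sum.inl a))) z := by
      rw [hueff, Matrix.mulVec_add, mv_sum HZ]
      simp
    have hterm : ∀ t ∈ Finset.univ.filter (fun t : Fin (dT - 1) => (t : ℕ) < (j : ℕ)),
        (HZ.mulVec (fun a => u t (Sum.inl a))) z
          = V (t : ℕ) (Sum.inl z) + V ((t : ℕ) + 1) (Sum.inl z) := by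
      intro t ht
      rw [← hHbl t z, Emid t (Sum.inl z)]
      have h1 : (t : ℕ) < dT := by omega
      have h2 : (t : ℕ) + 1 < dT := by omega
      simp [hV, h1, h2]
    rw [hlin, Finset.sum_congr rfl hterm, E0 z,
      filter_fin_sum (j : ℕ) hjlt (fun i => V i (Sum.inl z) + V (i + 1) (Sum.inl z)),
      telescope2 (fun i => V i (Sum.inl z)) (j : ℕ)]
    have hV0 : V 0 (Sum.inl z) = v z0 (Sum.inl z) := by simp [hV, hdT0, hz0]
    have hVj : V (j : ℕ) (Sum.inl z) = 0 := by
      have hjj : (⟨(j : ℕ), j.isLt⟩ : Fin dT) = j := by simp [Fin.ext_iff]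
      simp [hV, j.isLt, hjj, hj]
    rw [hV0, hVj, add_zero, Pi.zero_apply, CharTwo.add_self_eq_zero]
  refine ⟨part1, ?_, ?_⟩
  -- Part 2 : logical action
  · funext i
    set M : Matrix (Fin q) (Fin n) (ZMod 2) := α * JZ with hM
    set N : Matrix (Fin q) (Fin nG) (ZMod 2) := α * JZ * R with hN
    have hNS : N * S = M := hs3a
    have hNHG : N * HGᵀ = 0 := by
      have := congrArg Matrix.transpose hs3b
      simpa [Matrix.transpose_mul] using this
    have hterm : ∀ t ∈ Finset.univ.filter (fun t : Fin (dT - 1) => (t : ℕ) < (j : ℕ)),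
        (M.mulVec (fun a => u t (Sum.inl a))) i
          = (N.mulVec (fun g => V (t : ℕ) (Sum.inr g) + V ((t : ℕ) + 1) (Sum.inr g))) i := by
      intro t ht
      have h1 : (t : ℕ) < dT := by omega
      have h2 : (t : ℕ) + 1 < dT := by omega
      have hS : S.mulVec (fun a => u t (Sum.inl a))
          = (fun g => V (t : ℕ) (Sum.inr g) + V ((t : ℕ) + 1) (Sum.inr g))
            + HGᵀ.mulVec (fun r => u t (Sum.inr r)) := by
        funext g
        have hg2 : (S.mulVec (fun a => u t (Sum.inl a))) g
            + (HGᵀ.mulVec (fun r => u t (Sum.inr r))) g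
            = v ⟨(t : ℕ), h1⟩ (Sum.inr g) + v ⟨(t : ℕ) + 1, h2⟩ (Sum.inr g) := by
          rw [← hHbr t g]; exact Emid t (Sum.inr g)
        have hre : ∀ a b c d : ZMod 2, a + b = c + d → a = c + d + b := by decide
        have h3 := hre _ _ _ _ hg2
        simp only [Pi.add_apply]
        rw [h3]
        simp only [hV]
        rw [dif_pos h1, dif_pos h2]
      calc (M.mulVec (fun a => u t (Sum.inl a))) i
          = ((N * S).mulVec (fun a => u t (Sum.inl a))) i := by rw [hNS]
        _ = (N.mulVec (S.mulVec (fun a => u t (Sum.inl a)))) i := by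
              rw [← Matrix.mulVec_mulVec]
        _ = _ := by
              rw [hS, Matrix.mulVec_add]
              have hz' : N.mulVec (HGᵀ.mulVec (fun r => u t (Sum.inr r))) = 0 := by
                rw [Matrix.mulVec_mulVec, hNHG]; simp
              rw [hz']
              simp
    have hlhs : (M.mulVec ueff) i
        = (M.mulVec u0) i + (N.mulVec (fun g => v z0 (Sum.inr g))) i := by
      rw [hueff, Matrix.mulVec_add, mv_sum M]
      simp only [Pi.add_apply, Finset.sum_apply]
      congr 1
      rw [Finset.sum_congr rfl hterm,
        filter_fin_sum (j : ℕ) hjlt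
          (fun tn => (N.mulVec (fun g => V tn (Sum.inr g) + V (tn + 1) (Sum.inr g))) i)]
      have hNlin : ∀ f g : Fin nG → ZMod 2,
          (N.mulVec (f + g)) i = (N.mulVec f) i + (N.mulVec g) i := by
        intro f g; rw [Matrix.mulVec_add]; rfl
      have hsum2 : ∑ tn ∈ Finset.range (j : ℕ),
          (N.mulVec (fun g => V tn (Sum.inr g) + V (tn + 1) (Sum.inr g))) i
          = ∑ tn ∈ Finset.range (j : ℕ),
            ((N.mulVec (fun g => V tn (Sum.inr g))) i
              + (N.mulVec (fun g => V (tn + 1) (Sum.inr g))) i) := by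
        refine Finset.sum_congr rfl fun tn _ => ?_
        have := hNlin (fun g => V tn (Sum.inr g)) (fun g => V (tn + 1) (Sum.inr g))
        rw [← this]
        congr 1
      rw [hsum2, telescope2 (fun tn => (N.mulVec (fun g => V tn (Sum.inr g))) i) (j : ℕ)]
      have hV0 : (fun g => V 0 (Sum.inr g)) = (fun g => v z0 (Sum.inr g)) := by
        funext g; simp [hV, hdT0, hz0]
      have hVj : (fun g => V (j : ℕ) (Sum.inr g)) = (0 : Fin nG → ZMod 2) := by
        funext g
        have hjj : (⟨(j : ℕ), j.isLt⟩ : Fin dT) = j := by simp [Fin.ext_iff]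
        simp [hV, j.isLt, hjj, hj]
      rw [hV0, hVj]
      simp
    have hrhs : ((JstOC dT M N).mulVec e) i
        = (M.mulVec u0) i + (N.mulVec (fun g => v z0 (Sum.inr g))) i := by
      simp only [JstOC, mulVec, dotProduct, Fintype.sum_sum_type, Fintype.sum_prod_type, he,
        Matrix.of_apply, Sum.elim_inl, Sum.elim_inr, zero_mul, mul_zero,
        Finset.sum_const_zero, add_zero, zero_add, ite_mul]
      congr 1
      have hc : ∀ x : Fin dT, ((x : ℕ) = 0) = (x = z0) := by
        intro x; simp [hz0, Fin.ext_iff]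
      simp only [hc]
      have hpull : ∀ x : Fin dT,
          (∑ g : Fin nG, if x = z0 then N i g * v x (Sum.inr g) else 0)
            = if x = z0 then ∑ g : Fin nG, N i g * v x (Sum.inr g) else 0 := by
        intro x; by_cases hx : x = z0 <;> simp [hx]
      rw [Finset.sum_congr rfl (fun x _ => hpull x), Finset.sum_ite_eq']
      simp [mulVec, dotProduct]
    rw [hlhs, hrhs]
  -- Part 3 : weight bound
  · rw [hueff]
    have s1 : hammingNorm (u0 + ∑ t ∈ Finset.univ.filter
            (fun t : Fin (dT - 1) => (t : ℕ) < (j : ℕ)), (fun a => u t (Sum.inl a)))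
        ≤ hammingNorm u0 + ∑ t ∈ Finset.univ.filter
            (fun t : Fin (dT - 1) => (t : ℕ) < (j : ℕ)),
              hammingNorm (fun a => u t (Sum.inl a)) := by
      refine le_trans (hn_add_le _ _) ?_
      have := hn_sum_le (Finset.univ.filter (fun t : Fin (dT - 1) => (t : ℕ) < (j : ℕ)))
        (fun t => (fun a => u t (Sum.inl a)))
      omega
    have s2 : ∑ t ∈ Finset.univ.filter (fun t : Fin (dT - 1) => (t : ℕ) < (j : ℕ)),
          hammingNorm (fun a => u t (Sum.inl a))
        ≤ ∑ t : Fin (dT - 1), hammingNorm (u t) := by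
      calc ∑ t ∈ Finset.univ.filter (fun t : Fin (dT - 1) => (t : ℕ) < (j : ℕ)),
            hammingNorm (fun a => u t (Sum.inl a))
          ≤ ∑ t : Fin (dT - 1), hammingNorm (fun a => u t (Sum.inl a)) :=
            Finset.sum_le_sum_of_subset (Finset.filter_subset _ _)
        _ ≤ _ := by
            refine Finset.sum_le_sum fun t _ => ?_
            rw [hn_eq_sum, hn_eq_sum, Fintype.sum_sum_type]
            exact Nat.le_add_right _ _
    have hE : hammingNorm e = hammingNorm u0 + ((∑ t : Fin (dT - 1), hammingNorm (u t))
        + (hammingNorm u1 + ∑ sidx : Fin dT, hammingNorm (v sidx))) := by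
      rw [he]
      simp only [hn_eq_sum, Fintype.sum_sum_type, Fintype.sum_prod_type,
        Sum.elim_inl, Sum.elim_inr]
      rfl
    omega
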